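/- arXiv:1802.07600 — 5 statements merged into one kernel-verified Lean document; each statement's English description precedes it below -/
import Mathlib

section
/- Let L be a prefix-free language recognized by a DFA A with state set Q, let w = a₁⋯aₘ be a word, and let S be a set of subintervals of [1,m] that is overlapping (all intervals share a common point) and increasing (intervals with the same right endpoint are equal). If for every [i,j] ∈ S the factor w[i,j] belongs to L, then |S| ≤ |Q|. -/
/-!
Fix a point `ℓ` common to all intervals and send `[i, j] ∈ S` to the state the DFA reaches after
reading `w[i, ℓ]`. This map is injective: if `[i, j]` and `[k, l]` with `j ≤ l` reach the same
state, then `w[k, ℓ] w[ℓ+1, j]` is accepted, since `w[i, ℓ] w[ℓ+1, j]` is, and it is a prefix of the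
accepted word `w[k, ℓ] w[ℓ+1, l]`; prefix-freeness forces `j = l`, and then `i = k` because `S`
is increasing.
-/

def Language.IsPrefixFree {α : Type*} (L : Language α) : Prop :=
  ∀ x ∈ L, ∀ y ∈ L, x <+: y → x = y

theorem DFA.eq_of_eval_eq_of_prefix {α σ : Type*} {A : DFA α σ} (hpf : A.accepts.IsPrefixFree)
    {x y z z' : List α} (hxy : A.eval x = A.eval y) (hz : x ++ z ∈ A.accepts)
    (hz' : y ++ z' ∈ A.accepts) (hzz' : z <+: z') : z = z' := by
  have hyz : y ++ z ∈ A.accepts := by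
    rw [DFA.mem_accepts, DFA.eval, DFA.evalFrom_of_append] at hz ⊢
    rwa [← DFA.eval, ← hxy]
  exact List.append_cancel_left <| hpf _ hyz _ hz' <| (List.prefix_append_right_inj y).2 hzz'

namespace List

variable {α : Type*}

theorem extract_append_extract (l : List α) {i j k : ℕ} (hij : i ≤ j) (hjk : j ≤ k) :
    l.extract i j ++ l.extract j k = l.extract i k := by
  simp only [extract_eq_take_drop]
  rw [show k - i = (j - i) + (k - j) by omega, take_add, drop_drop, Nat.add_sub_cancel' hij]

theorem extract_prefix_extract (l : List α) (i : ℕ) {j k : ℕ} (hjk : j ≤ k) :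
    l.extract i j <+: l.extract i k :=
  take_prefix_take_left (by omega)

theorem length_extract_of_le (l : List α) {i j : ℕ} (hj : j ≤ l.length) :
    (l.extract i j).length = j - i := by
  simp only [extract_eq_take_drop, length_take, length_drop]
  omega

end List

/-- If `L` is a prefix-free language recognized by a DFA with state set `σ`,
`w` a word of length `m`, and `S` an overlapping increasing set of subintervals
of `[1,m]` all of whose factors of `w` lie in `L`, then `|S| ≤ |σ|`. -/
theorem overlap_lemma {α σ : Type*} [Fintype σ] (A : DFA α σ)
    (hpf : ∀ x ∈ A.accepts, ∀ y ∈ A.accepts, x <+: y → x = y)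
    (m : ℕ) (w : List α) (hw : w.length = m)
    (S : Finset (ℕ × ℕ))
    (hsub : ∀ p ∈ S, 1 ≤ p.1 ∧ p.1 ≤ p.2 ∧ p.2 ≤ m)
    (hover : ∃ ℓ, ∀ p ∈ S, p.1 ≤ ℓ ∧ ℓ ≤ p.2)
    (hinc : ∀ p ∈ S, ∀ q ∈ S, p.2 = q.2 → p.1 = q.1)
    (hmem : ∀ p ∈ S, ((w.drop (p.1 - 1)).take (p.2 - p.1 + 1)) ∈ A.accepts) :
    S.card ≤ Fintype.card σ := by
  obtain ⟨ℓ, hℓ⟩ := hover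
  -- In 0-based half-open coordinates, `w[i, j]` is `w.extract (i - 1) j`.
  have hsplit : ∀ p ∈ S, w.extract (p.1 - 1) ℓ ++ w.extract ℓ p.2 ∈ A.accepts := fun p hp => by
    obtain ⟨h1, -⟩ := hsub p hp
    obtain ⟨hpℓ, hℓp⟩ := hℓ p hp
    rw [w.extract_append_extract (by omega) hℓp, List.extract_eq_take_drop,
      show p.2 - (p.1 - 1) = p.2 - p.1 + 1 by omega]
    exact hmem p hp
  have hright_eq : ∀ p ∈ S, ∀ q ∈ S, p.2 ≤ q.2 →
      A.eval (w.extract (p.1 - 1) ℓ) = A.eval (w.extract (q.1 - 1) ℓ) → p.2 = q.2 := by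
    intro p hp q hq hpq heq
    have hpm := (hsub p hp).2.2
    have hqm := (hsub q hq).2.2
    have hℓp := (hℓ p hp).2
    have h := congrArg List.length <| DFA.eq_of_eval_eq_of_prefix hpf heq (hsplit p hp)
      (hsplit q hq) (w.extract_prefix_extract ℓ hpq)
    rw [w.length_extract_of_le (by omega), w.length_extract_of_le (by omega)] at h
    omega
  refine Finset.card_le_card_of_injOn (fun p => A.eval (w.extract (p.1 - 1) ℓ))
    (fun _ _ => Finset.mem_coe.2 (Finset.mem_univ _)) fun p hp q hq heq => ?_
  have h2 : p.2 = q.2 := (le_total p.2 q.2).elim (hright_eq p hp q hq · heq)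
    fun h => (hright_eq q hq p hp h heq.symm).symm
  exact Prod.ext (hinc p hp q hq h2) h2
end

section
/- For a prefix-free language K and languages M over Σ, one has K·(Σ* \ M) = (Σ* \ K·M) ∩ K·Σ*. -/
def PrefixFree {α : Type*} (K : Set (List α)) : Prop :=
  ∀ x ∈ K, ∀ y ∈ K, x <+: y → x = y

/-- Two prefixes of the same word are comparable, so they coincide when both lie in `K`. -/
theorem PrefixFree.append_inj {α : Type*} {K : Set (List α)} (hK : PrefixFree K)
    {x x' y y' : List α} (hx : x ∈ K) (hx' : x' ∈ K) (h : x ++ y = x' ++ y') :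
    x = x' ∧ y = y' := by
  have hxx' : x = x' := by
    rcases List.prefix_or_prefix_of_prefix (List.prefix_append x y)
        (h ▸ List.prefix_append x' y') with hle | hge
    · exact hK x hx x' hx' hle
    · exact (hK x' hx' x hx hge).symm
  subst hxx'
  exact ⟨rfl, List.append_cancel_left h⟩

/-- For prefix-free `K`: `K·(Σ* \ M) = (Σ* \ K·M) ∩ K·Σ*`. -/
theorem prefixFree_concat_compl {α : Type*} (K M : Set (List α))
    (hK : ∀ x ∈ K, ∀ y ∈ K, x <+: y → x = y) :
    {z : List α | ∃ x ∈ K, ∃ y ∉ M, z = x ++ y} =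
      {z : List α | ∃ x ∈ K, ∃ y ∈ M, z = x ++ y}ᶜ ∩
      {z : List α | ∃ x ∈ K, ∃ y : List α, z = x ++ y} := by
  ext z
  constructor
  · rintro ⟨x, hx, y, hy, rfl⟩
    refine ⟨?_, x, hx, y, rfl⟩
    rintro ⟨x', hx', y', hy', h⟩
    obtain ⟨-, rfl⟩ := PrefixFree.append_inj hK hx hx' h
    exact hy hy'
  · rintro ⟨hKM, x, hx, y, rfl⟩
    exact ⟨x, hx, y, fun hy => hKM ⟨x, hx, y, hy, rfl⟩, rfl⟩
end

section
/- Let A = (Q,Σ,q₀,δ,F) be a DFA. A pair of states (p,q) is synchronized (there exist words x,y,z of equal length ≥ 1 with δ(p,x)=p, δ(p,y)=q, δ(q,z)=q) if and only if both p and q are non-trivial (each admits a nonempty word looping at it) and there exists a nonempty word y with δ(p,y)=q whose length is divisible by |Q|!. -/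
/-!
Prefixing a word from `p` to `q` of length `n` with `|Q|! - 1` copies of a loop at `p` of the
same length gives a word from `p` to `q` of length `|Q|! · n`. Conversely, a nontrivial state
carries a loop of length at most `|Q|` (cut out repeated states); this length divides `|Q|!`, so
repeating that loop gives loops of every length divisible by `|Q|!`.
-/

open Nat

namespace DFA

variable {α σ : Type*} (M : DFA α σ)

theorem evalFrom_flatten_replicate {s : σ} {x : List α} (hx : M.evalFrom s x = s) (k : ℕ) :
    M.evalFrom s (List.replicate k x).flatten = s :=
  M.evalFrom_of_pow hx (Language.mem_kstar.2 ⟨_, rfl, fun _ hy => List.eq_of_mem_replicate hy⟩)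

theorem exists_loop_length_le_card [Fintype σ] {s : σ} {x : List α} (hx0 : x ≠ [])
    (hx : M.evalFrom s x = s) :
    ∃ u : List α, u ≠ [] ∧ u.length ≤ Fintype.card σ ∧ M.evalFrom s u = s := by
  induction hn : x.length using Nat.strong_induction_on generalizing x with
  | _ n ih =>
  by_cases hle : x.length ≤ Fintype.card σ
  · exact ⟨x, hx0, hle, hx⟩
  obtain ⟨r, a, b, c, rfl, hab, hb, ha, -, hc⟩ := M.evalFrom_split (le_of_not_ge hle) hx
  have hb_pos : 0 < b.length := List.length_pos_iff.2 hb
  simp only [List.length_append] at hle hn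
  -- Cutting out the inner loop `b` leaves a shorter loop `a ++ c`, nonempty as `x` is too long.
  refine ih (a ++ c).length (by simp only [List.length_append]; omega) ?_ ?_ rfl
  · intro hac
    simp only [List.append_eq_nil_iff] at hac
    simp only [hac.1, hac.2, List.length_nil] at hle hab
    omega
  · rw [evalFrom_of_append, ha, hc]

theorem exists_loop_length_eq_of_factorial_dvd [Fintype σ] {s : σ} {x : List α} (hx0 : x ≠ [])
    (hx : M.evalFrom s x = s) {m : ℕ} (hm : (Fintype.card σ)! ∣ m) :
    ∃ w : List α, w.length = m ∧ M.evalFrom s w = s := by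
  obtain ⟨u, hu0, hu_le, hu⟩ := M.exists_loop_length_le_card hx0 hx
  have hu_dvd : u.length ∣ m :=
    (Nat.dvd_factorial (List.length_pos_iff.2 hu0) hu_le).trans hm
  refine ⟨(List.replicate (m / u.length) u).flatten, ?_, M.evalFrom_flatten_replicate hu _⟩
  simp [Nat.div_mul_cancel hu_dvd]

end DFA

/-- A pair of states `(p,q)` of a DFA is synchronized iff both states are
non-trivial and some nonempty word of length divisible by `|Q|!` leads from
`p` to `q`. -/
theorem synchronized_iff {α σ : Type*} [Fintype σ] (A : DFA α σ) (p q : σ) :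
    (∃ x y z : List α, x.length = y.length ∧ y.length = z.length ∧
        1 ≤ x.length ∧ A.evalFrom p x = p ∧ A.evalFrom p y = q ∧
        A.evalFrom q z = q) ↔
      ((∃ x : List α, x ≠ [] ∧ A.evalFrom p x = p) ∧
       (∃ z : List α, z ≠ [] ∧ A.evalFrom q z = q) ∧
       (∃ y : List α, y ≠ [] ∧ (Fintype.card σ).factorial ∣ y.length ∧
          A.evalFrom p y = q)) := by
  constructor
  · rintro ⟨x, y, z, hxy, hyz, hx1, hx, hy, hz⟩
    have hx0 : x ≠ [] := List.ne_nil_of_length_pos hx1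
    have hz0 : z ≠ [] := List.ne_nil_of_length_pos (by omega)
    refine ⟨⟨x, hx0, hx⟩, ⟨z, hz0, hz⟩, (List.replicate ((Fintype.card σ)! - 1) x).flatten ++ y,
      by simp [List.ne_nil_of_length_pos (hxy ▸ hx1 : 0 < y.length)], ⟨x.length, ?_⟩, ?_⟩
    · simp only [List.length_append, List.length_flatten, List.map_replicate, List.sum_replicate,
        smul_eq_mul, ← hxy, ← Nat.succ_mul]
      rw [Nat.succ_eq_add_one, Nat.sub_add_cancel (Fintype.card σ).factorial_pos]
    · rw [DFA.evalFrom_of_append, A.evalFrom_flatten_replicate hx, hy]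
  · rintro ⟨⟨x, hx0, hx⟩, ⟨z, hz0, hz⟩, y, hy0, hdvd, hy⟩
    obtain ⟨x', hx'_len, hx'⟩ := A.exists_loop_length_eq_of_factorial_dvd hx0 hx hdvd
    obtain ⟨z', hz'_len, hz'⟩ := A.exists_loop_length_eq_of_factorial_dvd hz0 hz hdvd
    exact ⟨x', y, z', hx'_len, hz'_len.symm, hx'_len ▸ List.length_pos_iff.2 hy0, hx', hy, hz'⟩
end

section
/- Let Q be a finite set, F ⊆ Q, δ a deterministic transition function, and suppose every synchronized pair of states reachable from q₀ is F-consistent. Let T be the set of trivial states. Then for any run q₀ → q₁ → ⋯ → q_k of length k ≥ |Q|!·(|T|+1) and any residue i with 0 ≤ i ≤ |Q|!−1, the set {q_{i+j·|Q|!} : 0 ≤ j ≤ |T|} contains at least one non-trivial state, and any two non-trivial states in this set are both final or both non-final. -/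
section Helpers
variable {α σ : Type*}

lemma my_evalFrom_run (A : DFA α σ) (k : ℕ) (qs : ℕ → σ) (as : ℕ → α)
    (hrun : ∀ i < k, A.step (qs i) (as i) = qs (i + 1)) :
    ∀ e a, a + e ≤ k →
      A.evalFrom (qs a) (List.ofFn (fun t : Fin e => as (a + t))) = qs (a + e) := by
  intro e
  induction e with
  | zero => intro a _; simp [DFA.evalFrom]
  | succ e ih =>
    intro a ha
    rw [List.ofFn_succ]
    show A.evalFrom (A.step (qs a) (as (a + 0))) _ = _
    rw [Nat.add_zero, hrun a (by omega)]
    have h2 := ih (a + 1) (by omega)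
    have h3 : (List.ofFn fun t : Fin e => as (a + ↑t.succ)) =
        (List.ofFn fun t : Fin e => as (a + 1 + ↑t)) := by
      congr 1
      ext t
      congr 1
      simp [Fin.val_succ]
      omega
    rw [h3, h2]
    congr 1
    omega

lemma my_evalFrom_repeat (A : DFA α σ) (p : σ) (w : List α) (hp : A.evalFrom p w = p) :
    ∀ c : ℕ, A.evalFrom p (List.flatten (List.replicate c w)) = p := by
  intro c
  induction c with
  | zero => simp [DFA.evalFrom]
  | succ c ih =>
    rw [List.replicate_succ, List.flatten_cons]
    show List.foldl _ _ _ = _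
    rw [List.foldl_append]
    show A.evalFrom (A.evalFrom p w) _ = _
    rw [hp]
    exact ih

lemma my_short_cycle [Fintype σ] (A : DFA α σ) :
    ∀ n (x : List α), x.length = n → x ≠ [] → ∀ p, A.evalFrom p x = p →
      ∃ w : List α, w ≠ [] ∧ w.length ≤ Fintype.card σ ∧ A.evalFrom p w = p := by
  intro n
  induction n using Nat.strong_induction_on with
  | _ n ih =>
    intro x hxn hx p hp
    by_cases hle : x.length ≤ Fintype.card σ
    · exact ⟨x, hx, hle, hp⟩
    · push_neg at hle
      obtain ⟨u, v, huv, hfe⟩ := Fintype.exists_ne_map_eq_of_card_lt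
        (fun t : Fin (Fintype.card σ + 1) => A.evalFrom p (x.take t))
        (by simp)
      wlog hlt : (u : ℕ) < (v : ℕ) generalizing u v
      · refine this v u huv.symm hfe.symm ?_
        rcases lt_or_eq_of_le (Nat.le_of_not_lt hlt) with h | h
        · exact h
        · exact absurd (Fin.ext h.symm) huv
      · set w' := x.take u ++ x.drop v with hw'
        have hvlen : (v : ℕ) ≤ x.length := le_of_lt (lt_of_le_of_lt (Nat.le_of_lt_succ v.isLt) hle)
        have hlen : w'.length = (u : ℕ) + (x.length - v) := by
          simp [hw']
          omega
        have hev : A.evalFrom p w' = p := by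
          show List.foldl _ _ _ = _
          rw [hw', List.foldl_append]
          show A.evalFrom (A.evalFrom p (x.take u)) _ = _
          rw [hfe]
          have h4 : A.evalFrom p (x.take v ++ x.drop v) = p := by
            rw [List.take_append_drop]; exact hp
          rw [show A.evalFrom p (x.take (v:ℕ) ++ x.drop (v:ℕ)) =
            A.evalFrom (A.evalFrom p (x.take (v:ℕ))) (x.drop (v:ℕ)) from
            List.foldl_append .. ] at h4
          exact h4
        have hne : w' ≠ [] := by
          intro h
          rw [h] at hlen
          simp at hlen
          omega
        refine ih w'.length ?_ w' rfl hne p hev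
        have hucard : (u : ℕ) < (v : ℕ) := hlt
        omega

end Helpers

lemma my_cycle_exact [Fintype σ] (A : DFA α σ) (p : σ)
    (hp : ∃ x : List α, x ≠ [] ∧ A.evalFrom p x = p) (d : ℕ) (hd : 1 ≤ d) :
    ∃ w : List α, w.length = d * (Fintype.card σ).factorial ∧ A.evalFrom p w = p := by
  obtain ⟨x, hx, hpx⟩ := hp
  obtain ⟨w, hw, hwle, hwp⟩ := my_short_cycle A x.length x rfl hx p hpx
  have hm : 1 ≤ w.length := List.length_pos_iff.mpr hw
  obtain ⟨c, hc⟩ := Nat.dvd_factorial hm hwle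
  refine ⟨List.flatten (List.replicate (d * c) w), ?_, my_evalFrom_repeat A p w hwp _⟩
  simp [List.length_flatten, List.map_replicate, List.sum_replicate, hc]
  ring


/-- If every synchronized pair reachable from the start state of a DFA is
F-consistent, then along any run of length `k ≥ |Q|!·(|T|+1)` from the start
state (`T` the set of trivial states), for every residue `i ≤ |Q|!−1` the set
`{q_{i+j·|Q|!} : 0 ≤ j ≤ |T|}` contains a non-trivial state, and any two
non-trivial states in it are both final or both non-final. -/
theorem periodic_run_lemma {α σ : Type*} [Fintype σ] (A : DFA α σ)
    (hsync : ∀ p q : σ, (∃ u : List α, A.eval u = p) →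
      (∃ x y z : List α, x.length = y.length ∧ y.length = z.length ∧
        1 ≤ x.length ∧ A.evalFrom p x = p ∧ A.evalFrom p y = q ∧
        A.evalFrom q z = q) →
      (p ∈ A.accept ↔ q ∈ A.accept))
    (T : Finset σ)
    (hT : ∀ q : σ, q ∈ T ↔ ∀ x : List α, x ≠ [] → A.evalFrom q x ≠ q)
    (k : ℕ) (hk : (Fintype.card σ).factorial * (T.card + 1) ≤ k)
    (qs : ℕ → σ) (as : ℕ → α)
    (h0 : qs 0 = A.start)
    (hrun : ∀ i < k, A.step (qs i) (as i) = qs (i + 1))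
    (i : ℕ) (hi : i ≤ (Fintype.card σ).factorial - 1) :
    (∃ j ≤ T.card, qs (i + j * (Fintype.card σ).factorial) ∉ T) ∧
    (∀ j₁ ≤ T.card, ∀ j₂ ≤ T.card,
      qs (i + j₁ * (Fintype.card σ).factorial) ∉ T →
      qs (i + j₂ * (Fintype.card σ).factorial) ∉ T →
      (qs (i + j₁ * (Fintype.card σ).factorial) ∈ A.accept ↔
        qs (i + j₂ * (Fintype.card σ).factorial) ∈ A.accept)) := by
  set N := (Fintype.card σ).factorial with hNdef
  have hN : 1 ≤ N := Nat.factorial_pos _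
  have hidx : ∀ j ≤ T.card, i + j * N ≤ k := by
    intro j hj
    have h1 : j * N ≤ T.card * N := Nat.mul_le_mul_right N hj
    have h2 : N * (T.card + 1) = T.card * N + N := by ring
    omega
  have hseg : ∀ a b, a ≤ b → b ≤ k →
      ∃ w : List α, w.length = b - a ∧ A.evalFrom (qs a) w = qs b := by
    intro a b hab hbk
    have h5 := my_evalFrom_run A k qs as hrun (b - a) a (by omega)
    rw [show a + (b - a) = b by omega] at h5
    exact ⟨List.ofFn (fun t : Fin (b-a) => as (a + t)), List.length_ofFn, h5⟩
  have hnt : ∀ q, q ∉ T → ∃ x : List α, x ≠ [] ∧ A.evalFrom q x = q := by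
    intro q hq
    rw [hT] at hq
    push_neg at hq
    exact hq
  constructor
  · by_contra hcon
    push_neg at hcon
    obtain ⟨u, v, huv, hfe⟩ := Fintype.exists_ne_map_eq_of_card_lt
      (fun j : Fin (T.card + 1) => (⟨qs (i + j * N), hcon j (Nat.le_of_lt_succ j.isLt)⟩ : {x // x ∈ T}))
      (by simp)
    wlog hlt : (u : ℕ) < (v : ℕ) generalizing u v
    · refine this v u huv.symm hfe.symm ?_
      rcases lt_or_eq_of_le (Nat.le_of_not_lt hlt) with h | h
      · exact h
      · exact absurd (Fin.ext h.symm) huv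
    · have hqeq : qs (i + u * N) = qs (i + v * N) := by
        simpa [Subtype.ext_iff] using hfe
      have hu' : (u : ℕ) ≤ T.card := Nat.le_of_lt_succ u.isLt
      have hv' : (v : ℕ) ≤ T.card := Nat.le_of_lt_succ v.isLt
      have h1 : (u : ℕ) * N ≤ (v : ℕ) * N := Nat.mul_le_mul_right N (le_of_lt hlt)
      have h2 : (u : ℕ) * N + N ≤ (v : ℕ) * N := by
        have := Nat.mul_le_mul_right N hlt
        calc (u:ℕ) * N + N = ((u:ℕ) + 1) * N := by ring
        _ ≤ (v:ℕ) * N := Nat.mul_le_mul_right N hlt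
      obtain ⟨w, hwlen, hwev⟩ := hseg (i + u * N) (i + v * N) (by omega) (hidx v hv')
      have hwne : w ≠ [] := by
        intro h
        rw [h] at hwlen
        simp at hwlen
        omega
      have := (hT _).mp (hcon u hu') w hwne
      rw [hwev, ← hqeq] at this
      exact this rfl
  · have key : ∀ j₁, j₁ ≤ T.card → ∀ j₂, j₂ ≤ T.card → j₁ ≤ j₂ →
        qs (i + j₁ * N) ∉ T → qs (i + j₂ * N) ∉ T →
        (qs (i + j₁ * N) ∈ A.accept ↔ qs (i + j₂ * N) ∈ A.accept) := by
      intro j₁ h₁ j₂ h₂ hle hp hq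
      rcases eq_or_lt_of_le hle with h | h
      · rw [h]
      · have hd1 : 1 ≤ j₂ - j₁ := by omega
        have hsub : (j₂ - j₁) * N = j₂ * N - j₁ * N := Nat.sub_mul _ _ _
        have h1 : j₁ * N ≤ j₂ * N := Nat.mul_le_mul_right N (le_of_lt h)
        obtain ⟨u, hulen, huev⟩ := hseg 0 (i + j₁ * N) (Nat.zero_le _) (hidx j₁ h₁)
        obtain ⟨x, hxlen, hxev⟩ := my_cycle_exact A _ (hnt _ hp) (j₂ - j₁) hd1
        obtain ⟨z, hzlen, hzev⟩ := my_cycle_exact A _ (hnt _ hq) (j₂ - j₁) hd1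
        obtain ⟨y, hylen, hyev⟩ := hseg (i + j₁ * N) (i + j₂ * N) (by omega) (hidx j₂ h₂)
        have hyl : y.length = (j₂ - j₁) * N := by omega
        have hdN : 1 ≤ (j₂ - j₁) * N := Nat.mul_le_mul hd1 hN
        refine hsync _ _ ⟨u, ?_⟩ ⟨x, y, z, hxlen.trans hyl.symm, hyl.trans hzlen.symm, hxlen ▸ hdN, hxev, hyev, hzev⟩
        show A.evalFrom A.start u = _
        rw [← h0]
        simpa using huev
    intro j₁ h₁ j₂ h₂ hp hq
    rcases le_total j₁ j₂ with h | h
    · exact key j₁ h₁ j₂ h₂ h hp hq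
    · exact (key j₂ h₂ j₁ h₁ h hq hp).symm
end

section
/- Every deterministic counter with threshold n and failure ratio φ < 1/2 has at least (1 − 2φ)·n states. Here a counter with threshold n and failure ratio φ is a DFA A over the unary alphabet {a} such that for every m ≥ n, the number of indices i ∈ [0,m] for which the equivalence (aⁱ ∈ L(A) ⟺ i ≥ n) fails is at most φ·(m+1). -/
/-!
Fed the single letter over and over, a DFA with `K` states runs into a cycle: the state reached
after `i` letters is periodic in `i ≥ a` with some period `p`, where `a + p ≤ K`. If `n ≤ a` there
is nothing to prove. Otherwise pick a multiple `q` of `p` with `n - a ≤ q < n - a + p` and use the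
failure bound at `m + 1 = n + q`. Each `x ∈ [a, n)` yields its own failure: `x` itself if the word
of length `x` is accepted, and `x + q ≥ n` otherwise, since the word of length `x + q` is then
rejected as well. Hence `n - a ≤ φ (n + q) < φ (2 (n - a) + a + p)`, and rearranging gives
`(1 - 2φ) n ≤ a + p ≤ K`.
-/

open Function Set

theorem Function.exists_isPeriodicPt_iterate_of_fintype {α : Type*} [Fintype α] (f : α → α)
    (x : α) : ∃ a p, 0 < p ∧ a + p ≤ Fintype.card α ∧ IsPeriodicPt f p (f^[a] x) := by
  obtain ⟨i, j, hne, heq⟩ := Fintype.exists_ne_map_eq_of_card_lt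
    (fun i : Fin (Fintype.card α + 1) => f^[i] x) (by simp)
  wlog hij : i < j generalizing i j
  · exact this j i hne.symm heq.symm (lt_of_le_of_ne (not_lt.mp hij) hne.symm)
  refine ⟨i, j - i, by omega, by omega, ?_⟩
  change f^[j - i] (f^[i] x) = f^[i] x
  rw [← iterate_add_apply, Nat.sub_add_cancel hij.le]
  exact heq.symm

theorem Function.IsPeriodicPt.iterate_add_mul {α : Type*} {f : α → α} {x : α} {a p : ℕ}
    (h : IsPeriodicPt f p (f^[a] x)) {y : ℕ} (hy : a ≤ y) (c : ℕ) :
    f^[y + p * c] x = f^[y] x := by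
  have hy' : f^[y - a] (f^[a] x) = f^[y] x := by
    rw [← iterate_add_apply, Nat.sub_add_cancel hy]
  rw [add_comm, iterate_add_apply, ← hy']
  exact (h.apply_iterate (y - a)).mul_const c

theorem DFA.evalFrom_replicate {α σ : Type*} (M : DFA α σ) (s : σ) (c : α) (i : ℕ) :
    M.evalFrom s (List.replicate i c) = (M.step · c)^[i] s := by
  induction i with
  | zero => rfl
  | succ i ih => rw [List.replicate_succ', evalFrom_append_singleton, ih, iterate_succ_apply']

theorem Nat.exists_mul_mem_Ico (d : ℕ) {p : ℕ} (hp : 0 < p) : ∃ c, d ≤ p * c ∧ p * c < d + p := by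
  have hdiv := Nat.div_add_mod (d + p - 1) p
  have hmod := Nat.mod_lt (d + p - 1) hp
  exact ⟨(d + p - 1) / p, by omega, by omega⟩

def failures (acc : ℕ → Prop) (n m : ℕ) : Set ℕ := {i | i ≤ m ∧ ¬(acc i ↔ n ≤ i)}

theorem ncard_Ico_le_ncard_failures {acc : ℕ → Prop} {a n q m : ℕ}
    (hper : ∀ x, a ≤ x → (acc (x + q) ↔ acc x)) (hqn : n ≤ a + q) (hm : n + q = m + 1) :
    (Ico a n).ncard ≤ (failures acc n m).ncard := by
  classical
  refine ncard_le_ncard_of_injOn (fun x => if acc x then x else x + q) ?_ ?_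
    ((finite_Iic m).subset fun _ hi => hi.1)
  · rintro x ⟨hax, hxn⟩
    by_cases hx : acc x
    · rw [if_pos hx]
      exact ⟨by omega, fun h => absurd (h.mp hx) (by omega)⟩
    · rw [if_neg hx]
      exact ⟨by omega, fun h => hx ((hper x hax).mp (h.mpr (by omega)))⟩
  · rintro x ⟨hax, hxn⟩ y ⟨hay, hyn⟩ hxy
    by_cases hx : acc x <;> by_cases hy : acc y <;> simp only [hx, hy, if_true, if_false] at hxy <;>
      omega

/-- Every deterministic counter with threshold `n` and failure ratio
`φ < 1/2` has at least `(1 − 2φ)·n` states. -/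
theorem counter_lower_bound {σ : Type*} [Fintype σ]
    (A : DFA Unit σ) (n : ℕ) (φ : ℝ) (hφ0 : 0 ≤ φ) (hφ : φ < 1 / 2)
    (hcnt : ∀ m : ℕ, n ≤ m →
      ({i : ℕ | i ≤ m ∧
          ¬((List.replicate i () ∈ A.accepts) ↔ n ≤ i)}.ncard : ℝ) ≤
        φ * (m + 1)) :
    (1 - 2 * φ) * n ≤ Fintype.card σ := by
  obtain ⟨a, p, hp, hapK, hperiodic⟩ :=
    exists_isPeriodicPt_iterate_of_fintype (A.step · ()) A.start
  rcases le_or_gt n a with hna | han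
  · have hnK : (n : ℝ) ≤ Fintype.card σ := by exact_mod_cast (by omega : n ≤ Fintype.card σ)
    linarith [mul_nonneg hφ0 n.cast_nonneg]
  obtain ⟨d, rfl⟩ := Nat.exists_eq_add_of_le han.le
  obtain ⟨c, hdc, hcd⟩ := Nat.exists_mul_mem_Ico d hp
  obtain ⟨m, hm⟩ : ∃ m, a + d + p * c = m + 1 := ⟨_, (Nat.succ_pred_eq_of_pos (by omega)).symm⟩
  have hacc (x : ℕ) (hx : a ≤ x) :
      List.replicate (x + p * c) () ∈ A.accepts ↔ List.replicate x () ∈ A.accepts := by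
    simp only [DFA.mem_accepts, DFA.eval, DFA.evalFrom_replicate, hperiodic.iterate_add_mul hx]
  have hfail := ncard_Ico_le_ncard_failures (acc := fun i => List.replicate i () ∈ A.accepts)
    (n := a + d) hacc (by omega) hm
  rw [ncard_Ico_nat, add_tsub_cancel_left] at hfail
  have hd : (d : ℝ) ≤ φ * (a + d + p * c) := by
    have hcast : ((m : ℝ) + 1) = a + d + p * c := by exact_mod_cast hm.symm
    rw [← hcast]
    exact (Nat.cast_le.mpr hfail).trans (hcnt m (by omega))
  have hq : ((p * c : ℕ) : ℝ) + 1 ≤ d + p := by exact_mod_cast hcd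
  have hapK' : (a : ℝ) + p ≤ Fintype.card σ := by exact_mod_cast hapK
  push_cast at hq ⊢
  linarith [mul_le_mul_of_nonneg_left hq hφ0, mul_nonneg hφ0 a.cast_nonneg,
    mul_nonneg (by linarith : 0 ≤ 1 - φ) p.cast_nonneg]
end
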